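/- arXiv:1904.05406 — 2 statements merged into one kernel-verified Lean document; each statement's English description precedes it below -/
import Mathlib

section
/- Under the slackness assumptions ∑_i κ⁺_i > n + k − 2 and κ⁺_i > κ⁻_i for all indices i except possibly one, given any k-clustering C of n items respecting the bounds κ⁻ ≤ cluster sizes ≤ κ⁺, there is a sequence of at most k − 2 single-item transfers, each step respecting the bounds, after which at most one cluster has size equal to its upper bound κ⁺_i. -/
/-- The size of cluster `i` in the clustering `c`. -/
def clusterSize {X : Type*} [Fintype X] [DecidableEq X] {k : ℕ}
    (c : X → Fin k) (i : Fin k) : ℕ :=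
  (Finset.univ.filter fun x => c x = i).card

section Aux

variable {X : Type*} [Fintype X] [DecidableEq X] {k : ℕ}

lemma clusterSize_sum (c : X → Fin k) : ∑ i, clusterSize c i = Fintype.card X := by
  classical
  rw [Fintype.card,
    Finset.card_eq_sum_card_fiberwise (f := c) (t := Finset.univ)
      (fun x _ => Finset.mem_univ _)]
  rfl

lemma clusterSize_update_src (c : X → Fin k) (x : X) (b : Fin k) (hbx : b ≠ c x) :
    clusterSize (Function.update c x b) (c x) = clusterSize c (c x) - 1 := by
  unfold clusterSize
  have hset : (Finset.univ.filter fun y => Function.update c x b y = c x)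
      = (Finset.univ.filter fun y => c y = c x).erase x := by
    ext y
    by_cases h : y = x
    · subst h; simp [hbx]
    · simp [Function.update_of_ne h, h]
  rw [hset, Finset.card_erase_of_mem (by simp)]

lemma clusterSize_update_tgt (c : X → Fin k) (x : X) (b : Fin k) (hbx : b ≠ c x) :
    clusterSize (Function.update c x b) b = clusterSize c b + 1 := by
  unfold clusterSize
  have hset : (Finset.univ.filter fun y => Function.update c x b y = b)
      = insert x (Finset.univ.filter fun y => c y = b) := by
    ext y
    by_cases h : y = x
    · subst h; simp
    · simp [Function.update_of_ne h, h]
  rw [hset, Finset.card_insert_of_notMem (by simp [Ne.symm hbx])]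

lemma clusterSize_update_other (c : X → Fin k) (x : X) (b : Fin k) (l : Fin k)
    (hl1 : l ≠ c x) (hl2 : l ≠ b) :
    clusterSize (Function.update c x b) l = clusterSize c l := by
  unfold clusterSize
  congr 1
  ext y
  by_cases h : y = x
  · subst h; simp [hl1.symm, hl2.symm]
  · simp [Function.update_of_ne h]

lemma aux_step {n : ℕ} (hn : Fintype.card X = n) (kp km : Fin k → ℕ)
    (hb : ∀ i, km i ≤ kp i)
    (hslack : n + k - 2 < ∑ i, kp i)
    (i₁ : Fin k) (hstrict : ∀ i, i ≠ i₁ → km i < kp i) :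
    ∀ (t : ℕ) (c : X → Fin k),
      (∀ i, km i ≤ clusterSize c i ∧ clusterSize c i ≤ kp i) →
      (Finset.univ.filter fun i => clusterSize c i = kp i).card ≤ t →
      ∃ (m : ℕ) (f : ℕ → X → Fin k), m ≤ t - 1 ∧ f 0 = c ∧
        (∀ j < m, ∃ x : X, f (j + 1) x ≠ f j x ∧
          ∀ y : X, y ≠ x → f (j + 1) y = f j y) ∧
        (∀ j ≤ m, ∀ i, km i ≤ clusterSize (f j) i ∧ clusterSize (f j) i ≤ kp i) ∧
        (Finset.univ.filter fun i => clusterSize (f m) i = kp i).card ≤ 1 := by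
  intro t
  induction t with
  | zero =>
    intro c hc htc
    exact ⟨0, fun _ => c, Nat.zero_le _, rfl, by omega, fun j _ => hc,
      le_trans htc (by omega)⟩
  | succ t ih =>
    intro c hc htc
    by_cases h1 : (Finset.univ.filter fun i => clusterSize c i = kp i).card ≤ 1
    · exact ⟨0, fun _ => c, Nat.zero_le _, rfl, by omega, fun j _ => hc, h1⟩
    push_neg at h1
    -- a tight cluster i ≠ i₁
    obtain ⟨i, hi_mem, hi_ne⟩ := Finset.exists_mem_ne h1 i₁
    have hi : clusterSize c i = kp i := (Finset.mem_filter.mp hi_mem).2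
    have hkuniv : (Finset.univ : Finset (Fin k)).card = k := by simp
    have htk : (Finset.univ.filter fun i => clusterSize c i = kp i).card ≤ k :=
      le_trans (Finset.card_filter_le _ _) (le_of_eq hkuniv)
    -- a cluster with slack at least 2
    have hj : ∃ j, clusterSize c j + 2 ≤ kp j := by
      by_contra hcon
      push_neg at hcon
      have hsum : ∑ l, kp l ≤
          ∑ l, (clusterSize c l + if clusterSize c l = kp l then 0 else 1) := by
        refine Finset.sum_le_sum fun l _ => ?_
        split_ifs with h
        · omega
        · have := hcon l; omega
      rw [Finset.sum_add_distrib] at hsum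
      have hite : ∑ l, (if clusterSize c l = kp l then 0 else 1)
          = (Finset.univ.filter fun l => ¬ (clusterSize c l = kp l)).card := by
        rw [Finset.card_filter]
        refine Finset.sum_congr rfl fun l _ => ?_
        by_cases h : clusterSize c l = kp l <;> simp [h]
      have hneg : (Finset.univ.filter fun l => ¬ (clusterSize c l = kp l)).card
          + (Finset.univ.filter fun l => clusterSize c l = kp l).card = k := by
        rw [add_comm, Finset.card_filter_add_card_filter_not, hkuniv]
      have hsz : ∑ l, clusterSize c l = n := by rw [clusterSize_sum, hn]
      omega
    obtain ⟨j, hj2⟩ := hj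
    have hji : j ≠ i := by intro h; rw [h] at hj2; omega
    -- pick an item in cluster i
    have hpos : 0 < clusterSize c i := by
      have := hstrict i hi_ne; omega
    obtain ⟨x, hx⟩ := Finset.card_pos.mp hpos
    have hcx : c x = i := (Finset.mem_filter.mp hx).2
    have hbj : j ≠ c x := by rw [hcx]; exact hji
    set c' := Function.update c x j with hc'def
    have hs_i : clusterSize c' i = clusterSize c i - 1 := by
      rw [← hcx]; exact clusterSize_update_src c x j hbj
    have hs_j : clusterSize c' j = clusterSize c j + 1 :=
      clusterSize_update_tgt c x j hbj
    have hs_other : ∀ l, l ≠ i → l ≠ j → clusterSize c' l = clusterSize c l := by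
      intro l hl1 hl2
      exact clusterSize_update_other c x j l (by rw [hcx]; exact hl1) hl2
    have hc' : ∀ l, km l ≤ clusterSize c' l ∧ clusterSize c' l ≤ kp l := by
      intro l
      by_cases hl1 : l = i
      · subst hl1
        have := hstrict l hi_ne
        rw [hs_i]; omega
      by_cases hl2 : l = j
      · subst hl2
        have := (hc l).1
        rw [hs_j]; omega
      · rw [hs_other l hl1 hl2]; exact hc l
    have htight' : (Finset.univ.filter fun l => clusterSize c' l = kp l)
        = (Finset.univ.filter fun l => clusterSize c l = kp l).erase i := by
      ext l
      simp only [Finset.mem_filter, Finset.mem_erase, Finset.mem_univ, true_and]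
      by_cases hl1 : l = i
      · subst hl1
        have := hstrict l hi_ne
        rw [hs_i]
        constructor
        · intro h; omega
        · intro h; exact absurd rfl h.1
      by_cases hl2 : l = j
      · subst hl2
        rw [hs_j]
        constructor
        · intro h; omega
        · intro h; omega
      · rw [hs_other l hl1 hl2]; tauto
    have htc' : (Finset.univ.filter fun l => clusterSize c' l = kp l).card ≤ t := by
      rw [htight', Finset.card_erase_of_mem hi_mem]
      omega
    obtain ⟨m', f', hm', hf0, hmoves, hbounds, hfinal⟩ := ih c' hc' htc'
    refine ⟨m' + 1, fun j' => if j' = 0 then c else f' (j' - 1), by omega, by simp, ?_, ?_, ?_⟩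
    · intro j' hj'
      rcases Nat.eq_zero_or_pos j' with h0 | h0
      · subst h0
        refine ⟨x, ?_, ?_⟩
        · simp only [zero_add, one_ne_zero, if_neg, if_pos, Nat.sub_self]
          simp only [show (1:ℕ) - 1 = 0 from rfl, hf0, hc'def, if_false]
          simpa using hbj
        · intro y hy
          simp only [zero_add, one_ne_zero, if_neg, if_pos, Nat.sub_self]
          simp only [show (1:ℕ) - 1 = 0 from rfl, hf0, hc'def, if_false]
          simp [Function.update_of_ne hy]
      · obtain ⟨jj, rfl⟩ : ∃ jj, j' = jj + 1 := ⟨j' - 1, by omega⟩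
        obtain ⟨x', hx1, hx2⟩ := hmoves jj (by omega)
        refine ⟨x', ?_, ?_⟩
        · simpa using hx1
        · intro y hy; simpa using hx2 y hy
    · intro j' hj' l
      rcases Nat.eq_zero_or_pos j' with h0 | h0
      · subst h0; simpa using hc l
      · obtain ⟨jj, rfl⟩ : ∃ jj, j' = jj + 1 := ⟨j' - 1, by omega⟩
        simpa using hbounds jj (by omega) l
    · simpa using hfinal

end Aux

/-- Under the slackness assumptions `∑ᵢ κ⁺ᵢ > n + k − 2` and `κ⁺ᵢ > κ⁻ᵢ` for all
indices except possibly one index `i₁`, any `k`-clustering respecting the bounds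
can be modified by at most `k − 2` single-item transfers, each intermediate
clustering respecting the bounds, so that afterwards at most one cluster has size
equal to its upper bound. -/
theorem stmt_18 {X : Type*} [Fintype X] [DecidableEq X] {k n : ℕ}
    (hn : Fintype.card X = n) (kp km : Fin k → ℕ)
    (hb : ∀ i, km i ≤ kp i)
    (hslack : n + k - 2 < ∑ i, kp i)
    (i₁ : Fin k) (hstrict : ∀ i, i ≠ i₁ → km i < kp i)
    (c : X → Fin k)
    (hc : ∀ i, km i ≤ clusterSize c i ∧ clusterSize c i ≤ kp i) :
    ∃ (m : ℕ) (f : ℕ → X → Fin k), m ≤ k - 2 ∧ f 0 = c ∧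
      (∀ j < m, ∃ x : X, f (j + 1) x ≠ f j x ∧
        ∀ y : X, y ≠ x → f (j + 1) y = f j y) ∧
      (∀ j ≤ m, ∀ i, km i ≤ clusterSize (f j) i ∧ clusterSize (f j) i ≤ kp i) ∧
      (Finset.univ.filter fun i => clusterSize (f m) i = kp i).card ≤ 1 := by
  classical
  set t := (Finset.univ.filter fun i => clusterSize c i = kp i).card with ht_def
  have htk : t ≤ k := le_trans (Finset.card_filter_le _ _) (by simp)
  have ht : t - 1 ≤ k - 2 := by
    by_cases h1 : t ≤ 1
    · omega
    · push_neg at h1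
      have hk2 : 2 ≤ k := by omega
      have htne : t ≠ k := by
        intro heq
        have huniv : (Finset.univ.filter fun i => clusterSize c i = kp i)
            = Finset.univ := by
          apply Finset.eq_univ_of_card
          rw [← ht_def, heq]; simp
        have hall : ∀ i, clusterSize c i = kp i := by
          intro i
          have : i ∈ Finset.univ.filter fun i => clusterSize c i = kp i := by
            rw [huniv]; exact Finset.mem_univ i
          exact (Finset.mem_filter.mp this).2
        have hsum : ∑ i, kp i = n := by
          rw [← hn, ← clusterSize_sum c]
          exact Finset.sum_congr rfl fun i _ => (hall i).symm
        omega
      omega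
  obtain ⟨m, f, hm, hf0, hmoves, hbounds, hfinal⟩ :=
    aux_step hn kp km hb hslack i₁ hstrict t c hc (le_of_eq ht_def.symm)
  exact ⟨m, f, le_trans hm ht, hf0, hmoves, hbounds, hfinal⟩
end

section
/- If a k-clustering C respects bounds κ⁻ ≤ |C_i| ≤ κ⁺_i with ∑_i κ⁺_i > n + k − 2, at most one cluster attains κ⁺_i = κ⁻_i, and more than one cluster C_j satisfies |C_j| = κ⁺_j, then there exist indices j and ℓ with |C_j| = κ⁺_j > κ⁻_j and |C_ℓ| < κ⁺_ℓ − 1. -/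
/-- If a `k`-clustering respects bounds `κ⁻ᵢ ≤ |Cᵢ| ≤ κ⁺ᵢ` with `∑ᵢ κ⁺ᵢ > n + k − 2`,
at most one cluster has `κ⁺ᵢ = κ⁻ᵢ`, and more than one cluster satisfies
`|Cⱼ| = κ⁺ⱼ`, then there exist indices `j` and `ℓ` with `|Cⱼ| = κ⁺ⱼ > κ⁻ⱼ` and
`|Cₗ| < κ⁺ₗ − 1`. -/
theorem stmt_19 {X : Type*} [Fintype X] [DecidableEq X] {k n : ℕ}
    (hn : Fintype.card X = n) (kp km : Fin k → ℕ)
    (hb : ∀ i, km i ≤ kp i)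
    (c : X → Fin k)
    (hc : ∀ i, km i ≤ clusterSize c i ∧ clusterSize c i ≤ kp i)
    (hslack : n + k - 2 < ∑ i, kp i)
    (hone : (Finset.univ.filter fun i => kp i = km i).card ≤ 1)
    (htwo : 2 ≤ (Finset.univ.filter fun j => clusterSize c j = kp j).card) :
    ∃ j ℓ : Fin k, clusterSize c j = kp j ∧ km j < kp j ∧
      clusterSize c ℓ + 1 < kp ℓ := by
  classical
  set T : Finset (Fin k) := Finset.univ.filter fun j => clusterSize c j = kp j with hT
  -- total size is n
  have hsum : ∑ i, clusterSize c i = n := by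
    rw [← hn]
    exact (Finset.card_eq_sum_card_fiberwise (f := c) (fun x _ => Finset.mem_univ _)).symm
  -- find j
  have hjex : ((T \ Finset.univ.filter fun i => kp i = km i)).Nonempty := by
    rw [← Finset.card_pos]
    have := Finset.le_card_sdiff (Finset.univ.filter fun i => kp i = km i) T
    omega
  obtain ⟨j, hj⟩ := hjex
  rw [Finset.mem_sdiff, hT, Finset.mem_filter, Finset.mem_filter] at hj
  refine ⟨j, ?_⟩
  have hjne : kp j ≠ km j := fun h => hj.2 ⟨Finset.mem_univ _, h⟩
  have hjlt : km j < kp j := lt_of_le_of_ne (hb j) (Ne.symm hjne)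
  -- find ℓ
  by_contra hcon
  push_neg at hcon
  have hℓ : ∀ ℓ : Fin k, kp ℓ ≤ clusterSize c ℓ + 1 := by
    intro ℓ
    have := hcon ℓ hj.1.2 hjlt
    omega
  have hTk : T.card ≤ k := by
    simpa using Finset.card_le_card (Finset.subset_univ T)
  have hsplit : ∑ i, kp i ≤ n + (k - T.card) := by
    have h1 : ∑ i ∈ T, kp i = ∑ i ∈ T, clusterSize c i := by
      apply Finset.sum_congr rfl
      intro i hi
      rw [hT, Finset.mem_filter] at hi
      exact hi.2.symm
    have h2 : ∑ i ∈ Tᶜ, kp i ≤ ∑ i ∈ Tᶜ, (clusterSize c i + 1) :=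
      Finset.sum_le_sum fun i _ => hℓ i
    have h3 : ∑ i ∈ Tᶜ, (clusterSize c i + 1) = (∑ i ∈ Tᶜ, clusterSize c i) + Tᶜ.card := by
      rw [Finset.sum_add_distrib, Finset.sum_const, smul_eq_mul, mul_one]
    have h4 : Tᶜ.card = k - T.card := by
      rw [Finset.card_compl]; simp
    have h5 : (∑ i ∈ T, clusterSize c i) + ∑ i ∈ Tᶜ, clusterSize c i = n := by
      rw [Finset.sum_add_sum_compl, hsum]
    have h6 : (∑ i ∈ T, kp i) + ∑ i ∈ Tᶜ, kp i = ∑ i, kp i := Finset.sum_add_sum_compl T kp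
    omega
  omega
end
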